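/- arXiv:2511.14568 — 2 statements merged into one kernel-verified Lean document; each statement's English description precedes it below -/
import Mathlib

section
/- Let α, β > 0 (gamma parameters). Set ē := β·(1 - (1+X)^{-1/α}) ∈ ℝ⟦X⟧. Then for all natural numbers n ≥ k: c_n( ē^k / k! ) = (β^k/k!)·(-1/α)^n·Σ_{j=0}^{k} binom(k,j)·(-1)^j·(j+(n-1)α)_{n,α}, where (x)_{n,α} := ∏_{i=0}^{n-1}(x - iα) is the degenerate falling factorial with (x)_{0,α} := 1. -/
open PowerSeries Finset

noncomputable section

/-- `cN n F = n! * (coefficient of X^n in F)`. -/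
def cN (n : ℕ) (F : PowerSeries ℝ) : ℝ := (n.factorial : ℝ) * PowerSeries.coeff (R := ℝ) n F

/-- Formal substitution `F ∘ G` (faithful when `G` has zero constant coefficient). -/
def pcomp (F G : PowerSeries ℝ) : PowerSeries ℝ :=
  PowerSeries.mk fun n =>
    ∑ k ∈ Finset.range (n + 1), (PowerSeries.coeff (R := ℝ) k F) * (PowerSeries.coeff (R := ℝ) n (G ^ k))

/-- The formal series of log(1+X). -/
def L : PowerSeries ℝ := PowerSeries.mk fun n => if n = 0 then 0 else (-1 : ℝ) ^ (n - 1) / n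

/-- Falling factorial `(y)_m`. -/
def ff (y : ℝ) (m : ℕ) : ℝ := ∏ i ∈ Finset.range m, (y - i)

/-- Rising factorial `⟨y⟩_m`. -/
def rf (y : ℝ) (m : ℕ) : ℝ := ∏ i ∈ Finset.range m, (y + i)

/-- Degenerate falling factorial `(x)_{n,λ}`. -/
def ffl (x : ℝ) (n : ℕ) (lam : ℝ) : ℝ := ∏ i ∈ Finset.range n, (x - i * lam)

/-- Stirling numbers of the second kind. -/
def S2 (n k : ℕ) : ℝ :=
  (k.factorial : ℝ)⁻¹ * ∑ j ∈ Finset.range (k + 1), (-1 : ℝ) ^ (k - j) * (k.choose j) * (j : ℝ) ^ n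

/-- The falling factorial polynomial `x(x-1)⋯(x-n+1)`. -/
def fallingPoly (n : ℕ) : Polynomial ℝ := ∏ i ∈ Finset.range n, (Polynomial.X - Polynomial.C (i : ℝ))

/-- (Signed) Stirling numbers of the first kind. -/
def S1 (n k : ℕ) : ℝ := (fallingPoly n).coeff k

/-- Degenerate Stirling numbers of the second kind. -/
def S2d (lam : ℝ) (n k : ℕ) : ℝ :=
  (k.factorial : ℝ)⁻¹ *
    ∑ j ∈ Finset.range (k + 1), (-1 : ℝ) ^ (k - j) * (k.choose j) * ffl (j : ℝ) n lam

/-- Formal degenerate exponential `e_λ`. -/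
def degExp (lam : ℝ) : PowerSeries ℝ := PowerSeries.mk fun n => ffl 1 n lam / n.factorial

/-- Formal degenerate logarithm `Λ_λ` of `1+X`. -/
def degLog (lam : ℝ) : PowerSeries ℝ :=
  lam⁻¹ • PowerSeries.mk fun n => if n = 0 then 0 else ff lam n / n.factorial

/-- Degenerate Stirling numbers of the first kind. -/
def S1d (lam : ℝ) (n k : ℕ) : ℝ := cN n ((k.factorial : ℝ)⁻¹ • (degLog lam) ^ k)

/-- Binomial series `(1+X)^c`. -/
def binser (c : ℝ) : PowerSeries ℝ := PowerSeries.mk fun n => ff c n / n.factorial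

/-- Frobenius–Euler numbers of order `j`. -/
def FE (u : ℝ) (j n : ℕ) : ℝ :=
  cN n (((1 - u) • (PowerSeries.exp ℝ - PowerSeries.C (R := ℝ) u)⁻¹) ^ j)

/-! Binomially expanding `(1 - (1+X)^c)^k` and using `(1+X)^(j c) = ((1+X)^c)^j`, the `n`-th
coefficient is `Σ_j binom(k,j) (-1)^j (j c)_n / n!`. For `c = -1/α`, reading the product
`(j + (n-1)α)_{n,α}` backwards gives `∏_{i<n} (j + iα)`, and pulling `-1/α` into each factor turns
it into `(-j/α)_n`. -/

lemma ff_eq_descPochhammer_smeval (y : ℝ) (m : ℕ) : ff y m = (descPochhammer ℤ m).smeval y := by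
  induction m with
  | zero => simp [ff]
  | succ m ih =>
    rw [ff, prod_range_succ, ← ff, ih, descPochhammer_succ_right, Polynomial.smeval_mul,
      Polynomial.smeval_sub, Polynomial.smeval_X, Polynomial.smeval_natCast]
    simp

lemma binser_eq_binomialSeries (c : ℝ) : binser c = PowerSeries.binomialSeries ℝ c := by
  ext n
  rw [binser, coeff_mk, binomialSeries_coeff, ff_eq_descPochhammer_smeval,
    Ring.descPochhammer_eq_factorial_smul_choose, nsmul_eq_mul, smul_eq_mul, mul_one,
    mul_div_cancel_left₀ _ (by positivity)]

lemma PowerSeries.binomialSeries_nsmul {R A : Type*} [CommRing R] [BinomialRing R] [Ring A]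
    [Algebra R A] (j : ℕ) (r : R) : binomialSeries A (j • r) = binomialSeries A r ^ j := by
  induction j with
  | zero => simp
  | succ j ih => rw [succ_nsmul, binomialSeries_add, ih, pow_succ]

lemma PowerSeries.one_sub_binomialSeries_pow {R A : Type*} [CommRing R] [BinomialRing R]
    [CommRing A] [Algebra R A] (r : R) (k : ℕ) :
    (1 - binomialSeries A r) ^ k =
      ∑ j ∈ range (k + 1), ((-1) ^ j * k.choose j : A) • binomialSeries A (j • r) := by
  rw [sub_eq_neg_add, add_pow]
  refine sum_congr rfl fun j _ => ?_
  rw [binomialSeries_nsmul, neg_pow, one_pow, mul_one, smul_eq_C_mul]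
  simp only [map_mul, map_pow, map_neg, map_one, map_natCast]
  ring

lemma coeff_one_sub_binser_pow (c : ℝ) (k n : ℕ) :
    coeff n ((1 - binser c) ^ k) =
      ∑ j ∈ range (k + 1), (-1) ^ j * (k.choose j : ℝ) * (ff (j * c) n / n.factorial) := by
  simp only [binser_eq_binomialSeries, one_sub_binomialSeries_pow, map_sum]
  refine sum_congr rfl fun j _ => ?_
  rw [← binser_eq_binomialSeries, nsmul_eq_mul, binser, coeff_smul, coeff_mk, smul_eq_mul]

lemma ffl_add_sub_one_mul (x lam : ℝ) (n : ℕ) :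
    ffl (x + (n - 1) * lam) n lam = ∏ i ∈ range n, (x + i * lam) := by
  rw [ffl, ← prod_range_reflect]
  refine prod_congr rfl fun i hi => ?_
  have hi := mem_range.mp hi
  rw [Nat.cast_sub (by omega), Nat.cast_sub (by omega)]
  push_cast; ring

lemma neg_inv_pow_mul_ffl (x : ℝ) {lam : ℝ} (hlam : lam ≠ 0) (n : ℕ) :
    (-lam⁻¹) ^ n * ffl (x + (n - 1) * lam) n lam = ff (x * -lam⁻¹) n := by
  rw [ffl_add_sub_one_mul, ff, pow_eq_prod_const, ← prod_mul_distrib]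
  refine prod_congr rfl fun i _ => ?_
  field_simp
  ring

theorem stmt13_general (α β : ℝ) (hα : 0 < α) (n k : ℕ) :
    cN n ((k.factorial : ℝ)⁻¹ • (β • (1 - binser (-α⁻¹))) ^ k)
      = β ^ k / (k.factorial : ℝ) * (-α⁻¹) ^ n *
          ∑ j ∈ Finset.range (k + 1),
            (k.choose j : ℝ) * (-1) ^ j * ffl ((j : ℝ) + ((n : ℝ) - 1) * α) n α := by
  rw [cN, smul_pow, smul_smul, map_smul, coeff_one_sub_binser_pow, smul_eq_mul, mul_sum, mul_sum,
    mul_sum]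
  refine sum_congr rfl fun j _ => ?_
  rw [← neg_inv_pow_mul_ffl _ hα.ne']
  field_simp

theorem stmt13 (α β : ℝ) (hα : 0 < α) (hβ : 0 < β) (n k : ℕ) (hkn : k ≤ n) :
    cN n ((k.factorial : ℝ)⁻¹ • (β • (1 - binser (-α⁻¹))) ^ k)
      = β ^ k / (k.factorial : ℝ) * (-α⁻¹) ^ n *
          ∑ j ∈ Finset.range (k + 1),
            (k.choose j : ℝ) * (-1) ^ j * ffl ((j : ℝ) + ((n : ℝ) - 1) * α) n α :=
  stmt13_general α β hα n k
end
end

section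
/- Let μ, σ ∈ ℝ with μ ≠ 0 and σ ≠ 0 (normal parameters). Set ē := -(μ/σ²) + (μ/σ²)·( (1+X)^{1/2} ∘ ( 2·(σ/μ)²·L ) ) ∈ ℝ⟦X⟧ (this series has zero constant coefficient). Then for all natural numbers n ≥ k: c_n( ē^k / k! ) = (1/k!)·(-μ/σ²)^k·Σ_{j=0}^{k} Σ_{l=0}^{n} (-1)^j·binom(k,j)·(j/2)_l·2^l·(σ/μ)^{2l}·S₁(n,l). -/
open PowerSeries Finset

noncomputable section

/-! Put `a := μ/σ²`, `t := 2(σ/μ)²` and `B := (1+X)^{1/2} ∘ (t L)`, so that `ē = -a (1 - B)` and the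
binomial theorem reduces everything to `c_n(B^j)`. Substitution is a ring homomorphism and
`(1+X)^c (1+X)^d = (1+X)^{c+d}`, hence `B^j = (1+X)^{j/2} ∘ (t L)`, and expanding the binomial series
leaves the exponential generating function `c_n(L^l) = l! S₁(n,l)`. That one holds because
differentiating `L^{m+1}` and using `(1+X) L' = 1` gives `c_n(L^l)/l!` the Stirling recurrence
`S₁(n+1,m+1) = S₁(n,m) - n S₁(n,m+1)`. -/

lemma cN_smul (n : ℕ) (c : ℝ) (F : ℝ⟦X⟧) : cN n (c • F) = c * cN n F := by
  rw [cN, cN, coeff_smul, smul_eq_mul, mul_left_comm]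

lemma cN_sum {ι : Type*} (n : ℕ) (s : Finset ι) (F : ι → ℝ⟦X⟧) :
    cN n (∑ i ∈ s, F i) = ∑ i ∈ s, cN n (F i) := by
  rw [cN, map_sum, mul_sum]
  rfl

lemma coeff_pow_eq_zero_of_lt {R : Type*} [CommSemiring R] {G : R⟦X⟧} (hG : constantCoeff G = 0)
    {n s : ℕ} (h : n < s) :
    coeff n (G ^ s) = 0 :=
  X_pow_dvd_iff.mp (pow_dvd_pow_of_dvd (X_dvd_iff.mpr hG) s) n h

lemma pcomp_eq_subst {G : ℝ⟦X⟧} (hG : constantCoeff G = 0) (F : ℝ⟦X⟧) :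
    pcomp F G = F.subst G := by
  ext n
  rw [coeff_subst' (HasSubst.of_constantCoeff_zero' hG), pcomp, coeff_mk,
    finsum_eq_sum_of_support_subset _ (s := range (n + 1))]
  · rfl
  · intro d hd
    rw [Function.mem_support] at hd
    rw [coe_range, Set.mem_Iio, Nat.lt_succ_iff]
    by_contra! h
    exact hd (by rw [coeff_pow_eq_zero_of_lt hG h, smul_zero])

lemma ff_eq_eval_descPochhammer (y : ℝ) (m : ℕ) : ff y m = (descPochhammer ℝ m).eval y :=
  (descPochhammer_eval_eq_prod_range m y).symm

lemma binser_pow (c : ℝ) (j : ℕ) : binser c ^ j = binser (j * c) := by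
  induction j with
  | zero => simp [binser_eq_binomialSeries]
  | succ j ih =>
    rw [pow_succ, ih, Nat.cast_succ, add_one_mul]
    simp only [binser_eq_binomialSeries, binomialSeries_add]

lemma pcomp_binser_pow {G : ℝ⟦X⟧} (hG : constantCoeff G = 0) (c : ℝ) (j : ℕ) :
    pcomp (binser c) G ^ j = pcomp (binser (j * c)) G := by
  rw [pcomp_eq_subst hG, pcomp_eq_subst hG, ← subst_pow (HasSubst.of_constantCoeff_zero' hG),
    binser_pow]

lemma constantCoeff_L : constantCoeff L = 0 := by
  simp [L, ← coeff_zero_eq_constantCoeff_apply]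

lemma coeff_derivative_L (n : ℕ) : coeff n (d⁄dX ℝ L) = (-1) ^ n := by
  rw [coeff_derivative, L, coeff_mk, if_neg n.succ_ne_zero, Nat.add_sub_cancel]
  push_cast
  field_simp

lemma one_add_X_mul_derivative_L : (1 + X) * d⁄dX ℝ L = 1 := by
  ext n
  rcases n with _ | n
  · simp [add_mul, coeff_derivative_L, coeff_zero_X_mul, -coeff_zero_eq_constantCoeff]
  · simp [add_mul, coeff_derivative_L, coeff_succ_X_mul, pow_succ]

lemma one_add_X_mul_derivative_L_pow (m : ℕ) :
    (1 + X) * d⁄dX ℝ (L ^ (m + 1)) = ((m : ℝ) + 1) • L ^ m := by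
  rw [Derivation.leibniz_pow, Nat.add_sub_cancel, smul_eq_mul, mul_smul_comm, mul_left_comm,
    one_add_X_mul_derivative_L, mul_one, ← Nat.cast_smul_eq_nsmul ℝ]
  push_cast
  rfl

lemma cN_one_add_X_mul_derivative (f : ℝ⟦X⟧) (n : ℕ) :
    cN n ((1 + X) * d⁄dX ℝ f) = cN (n + 1) f + n * cN n f := by
  rcases n with _ | n
  · simp [cN, add_mul, coeff_derivative, coeff_zero_X_mul, -coeff_zero_eq_constantCoeff]
  · simp only [cN, add_mul, one_mul, map_add, coeff_succ_X_mul, coeff_derivative,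
      Nat.factorial_succ]
    push_cast
    ring

lemma cN_L_pow_succ (n m : ℕ) :
    cN (n + 1) (L ^ (m + 1)) + n * cN n (L ^ (m + 1)) = ((m : ℝ) + 1) * cN n (L ^ m) := by
  rw [← cN_one_add_X_mul_derivative, one_add_X_mul_derivative_L_pow, cN, cN, coeff_smul,
    smul_eq_mul]
  ring

lemma S1_zero_left (l : ℕ) : S1 0 l = if l = 0 then 1 else 0 := by
  simp [S1, fallingPoly, Polynomial.coeff_one]

lemma S1_succ_zero (n : ℕ) : S1 (n + 1) 0 = 0 := by
  simp [S1, fallingPoly, Polynomial.coeff_zero_eq_eval_zero, Polynomial.eval_prod,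
    Finset.prod_range_succ']

lemma S1_succ_succ (n m : ℕ) : S1 (n + 1) (m + 1) = S1 n m - n * S1 n (m + 1) := by
  rw [S1, fallingPoly, prod_range_succ, ← fallingPoly, mul_sub, Polynomial.coeff_sub,
    Polynomial.coeff_mul_X, Polynomial.coeff_mul_C, S1, S1, mul_comm]

lemma cN_L_pow (n l : ℕ) : cN n (L ^ l) = l.factorial * S1 n l := by
  induction n generalizing l with
  | zero =>
    rcases l with _ | l
    · simp [cN, S1_zero_left]
    · simp [cN, S1_zero_left, constantCoeff_L]
  | succ n ih =>
    rcases l with _ | m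
    · simp [cN, S1_succ_zero, coeff_one]
    · rw [S1_succ_succ, eq_sub_of_add_eq (cN_L_pow_succ n m), ih, ih, Nat.factorial_succ]
      push_cast
      ring

lemma cN_pcomp_binser_smul_L (c t : ℝ) (n : ℕ) :
    cN n (pcomp (binser c) (t • L)) = ∑ l ∈ range (n + 1), ff c l * t ^ l * S1 n l := by
  rw [cN, pcomp, coeff_mk, mul_sum]
  refine sum_congr rfl fun l _ => ?_
  have hl : (l.factorial : ℝ) ≠ 0 := by positivity
  rw [smul_pow, coeff_smul, smul_eq_mul, binser, coeff_mk]
  calc (n.factorial : ℝ) * (ff c l / l.factorial * (t ^ l * coeff n (L ^ l)))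
      = ff c l / l.factorial * t ^ l * cN n (L ^ l) := by rw [cN]; ring
    _ = ff c l * t ^ l * S1 n l := by rw [cN_L_pow]; field_simp

theorem stmt15_general (μ σ : ℝ) (n k : ℕ) :
    cN n ((k.factorial : ℝ)⁻¹ •
        (PowerSeries.C (R := ℝ) (-(μ / σ ^ 2)) +
          (μ / σ ^ 2) • pcomp (binser (1 / 2)) ((2 * (σ / μ) ^ 2) • L)) ^ k)
      = (k.factorial : ℝ)⁻¹ * (-(μ / σ ^ 2)) ^ k *
          ∑ j ∈ Finset.range (k + 1), ∑ l ∈ Finset.range (n + 1),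
            (-1 : ℝ) ^ j * (k.choose j : ℝ) * ff ((j : ℝ) / 2) l * 2 ^ l *
              (σ / μ) ^ (2 * l) * S1 n l := by
  set a := μ / σ ^ 2
  set t := 2 * (σ / μ) ^ 2
  set B := pcomp (binser (1 / 2)) (t • L)
  have hG : constantCoeff (t • L) = 0 := by simp [constantCoeff_L]
  have hē : C (-a) + a • B = (-a) • (-B + 1) := by
    rw [smul_eq_C_mul, smul_eq_C_mul, map_neg]
    ring
  have hB (j : ℕ) : cN n (B ^ j) = ∑ l ∈ range (n + 1), ff ((j : ℝ) / 2) l * t ^ l * S1 n l := by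
    rw [pcomp_binser_pow hG, cN_pcomp_binser_smul_L, mul_one_div]
  have hexpand : (-B + 1) ^ k = ∑ j ∈ range (k + 1), ((-1) ^ j * (k.choose j : ℝ)) • B ^ j := by
    refine (add_pow _ _ _).trans (sum_congr rfl fun j _ => ?_)
    rw [neg_pow, one_pow, mul_one, smul_eq_C_mul, map_mul, map_pow, map_neg, map_one,
      map_natCast]
    ring
  rw [hē, smul_pow, hexpand, cN_smul, cN_smul, cN_sum, mul_assoc]
  simp only [cN_smul, hB, mul_sum]
  refine sum_congr rfl fun j _ => sum_congr rfl fun l _ => ?_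
  rw [mul_pow, pow_mul]
  ring

theorem stmt15 (μ σ : ℝ) (hμ : μ ≠ 0) (hσ : σ ≠ 0) (n k : ℕ) (hkn : k ≤ n) :
    cN n ((k.factorial : ℝ)⁻¹ •
        (PowerSeries.C (R := ℝ) (-(μ / σ ^ 2)) +
          (μ / σ ^ 2) • pcomp (binser (1 / 2)) ((2 * (σ / μ) ^ 2) • L)) ^ k)
      = (k.factorial : ℝ)⁻¹ * (-(μ / σ ^ 2)) ^ k *
          ∑ j ∈ Finset.range (k + 1), ∑ l ∈ Finset.range (n + 1),
            (-1 : ℝ) ^ j * (k.choose j : ℝ) * ff ((j : ℝ) / 2) l * 2 ^ l *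
              (σ / μ) ^ (2 * l) * S1 n l :=
  stmt15_general μ σ n k
end
end
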